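/- arXiv:0708.3720 — 6 statements merged into one kernel-verified Lean document; each statement's English description precedes it below -/
import Mathlib

section
/- Let n_ε be a nonnegative classical solution of the rescaled parabolic Lotka–Volterra equation ∂t n_ε − ε Δ n_ε = (n_ε/ε) R(x, I_ε(t)) on [0,∞)×ℝ^d, with I_ε(t) = ∫_{ℝ^d} ψ(x) n_ε(t,x) dx. Then there exists a constant C > 0, depending only on ψ, K, I_m, I_M (and not on ε), such that: if I_m − Cε² ≤ I_ε(0) ≤ I_M + Cε², then I_m − Cε² ≤ I_ε(t) ≤ I_M + Cε² for all t ≥ 0. -/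
open MeasureTheory Set

/-! Testing the equation against `ψ` and integrating by parts gives
`I' = ε ∫ n Δψ + ε⁻¹ ∫ ψ R(x, I) n`, and the diffusion term is at most `ε (d Cψ / ψm) I` in
absolute value. Since `∂_I R ≤ -1/K`, `R(·, I) ≤ -(I - I_M)/K` above `I_M` and
`R(·, I) ≥ (I_m - I)/K` below `I_m`; so with `C = K (d Cψ / ψm + 1)` the reaction term beats the
diffusion term as soon as `I` leaves `[I_m - Cε², I_M + Cε²]`, and a barrier argument for the
scalar function `I` keeps it inside. -/

/-- The Laplacian of `f : ℝ^d → ℝ`, as the sum of second derivatives in the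
coordinate directions. -/
noncomputable def lap {d : ℕ} (f : EuclideanSpace ℝ (Fin d) → ℝ)
    (x : EuclideanSpace ℝ (Fin d)) : ℝ :=
  ∑ i : Fin d,
    iteratedFDeriv ℝ 2 f x ![EuclideanSpace.single i (1 : ℝ), EuclideanSpace.single i (1 : ℝ)]

lemma le_of_hasDerivAt_of_nonpos_above {f f' : ℝ → ℝ} {M : ℝ}
    (hf : ∀ t ≥ 0, HasDerivAt f (f' t) t) (h0 : f 0 ≤ M)
    (hf' : ∀ t ≥ 0, M < f t → f' t ≤ 0) {t : ℝ} (ht : 0 ≤ t) : f t ≤ M := by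
  refine le_iff_forall_pos_le_add.mpr fun η hη => ?_
  set δ := η / (t + 1)
  have hδ : 0 < δ := by positivity
  have hB : ∀ s, HasDerivAt (fun s => M + δ * (s + 1)) δ s := fun s => by
    simpa using (((hasDerivAt_id s).add_const 1).const_mul δ).const_add M
  have hfence := image_le_of_deriv_right_lt_deriv_boundary (a := 0) (b := t)
    (fun s hs => (hf s hs.1).continuousAt.continuousWithinAt)
    (fun s hs => (hf s hs.1).hasDerivWithinAt) (by linarith) hB
    (fun s hs hfs => (hf' s hs.1 (by nlinarith [hs.1])).trans_lt hδ) ⟨ht, le_rfl⟩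
  rwa [div_mul_cancel₀ η (by positivity)] at hfence

lemma sub_le_of_deriv_le_neg {f : ℝ → ℝ} {c : ℝ} (hc : 0 < c) (hf : ∀ J, deriv f J ≤ -c)
    {a b : ℝ} (hab : a ≤ b) : f b - f a ≤ -c * (b - a) := by
  -- `deriv` vanishes where `f` is not differentiable, so the strict bound forces differentiability
  have hdiff : Differentiable ℝ f := fun J =>
    differentiableAt_of_deriv_ne_zero ((hf J).trans_lt (neg_neg_of_pos hc)).ne
  exact image_sub_le_mul_sub_of_deriv_le hdiff hf hab

section WeightedIntegrals

variable {α : Type*} [MeasurableSpace α] {μ : Measure α}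

lemma abs_integral_mul_le_const_mul_integral {n g w : α → ℝ} {c : ℝ} (hn : ∀ x, 0 ≤ n x)
    (hng : Integrable (fun x => n x * g x) μ) (hwn : Integrable (fun x => w x * n x) μ)
    (hg : ∀ x, |g x| ≤ c * w x) :
    |∫ x, n x * g x ∂μ| ≤ c * ∫ x, w x * n x ∂μ :=
  calc |∫ x, n x * g x ∂μ| ≤ ∫ x, |n x * g x| ∂μ := abs_integral_le_integral_abs
    _ ≤ ∫ x, c * (w x * n x) ∂μ := integral_mono hng.abs (hwn.const_mul c) fun x => by
        rw [abs_mul, abs_of_nonneg (hn x), ← mul_assoc, mul_comm (n x)]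
        exact mul_le_mul_of_nonneg_right (hg x) (hn x)
    _ = c * ∫ x, w x * n x ∂μ := integral_const_mul c _

lemma integral_mul_le_const_mul_integral {r m : α → ℝ} {c : ℝ} (hm : ∀ x, 0 ≤ m x)
    (hrm : Integrable (fun x => r x * m x) μ) (hmi : Integrable m μ) (hr : ∀ x, r x ≤ c) :
    ∫ x, r x * m x ∂μ ≤ c * ∫ x, m x ∂μ := by
  rw [← integral_const_mul]
  exact integral_mono hrm (hmi.const_mul c) fun x => mul_le_mul_of_nonneg_right (hr x) (hm x)

lemma const_mul_integral_le_integral_mul {r m : α → ℝ} {c : ℝ} (hm : ∀ x, 0 ≤ m x)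
    (hrm : Integrable (fun x => r x * m x) μ) (hmi : Integrable m μ) (hr : ∀ x, c ≤ r x) :
    c * ∫ x, m x ∂μ ≤ ∫ x, r x * m x ∂μ := by
  rw [← integral_const_mul]
  exact integral_mono (hmi.const_mul c) hrm fun x => mul_le_mul_of_nonneg_right (hr x) (hm x)

lemma integral_mul_eq_add_of_sub_eq {ψ u v n r : α → ℝ} {ε : ℝ} (hε : ε ≠ 0)
    (hu : Integrable (fun x => ψ x * u x) μ) (hv : Integrable (fun x => v x * ψ x) μ)
    (h : ∀ x, u x - ε * v x = n x / ε * r x) :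
    Integrable (fun x => r x * (ψ x * n x)) μ ∧
      ∫ x, ψ x * u x ∂μ = ε * ∫ x, v x * ψ x ∂μ + ε⁻¹ * ∫ x, r x * (ψ x * n x) ∂μ := by
  have hpt : (fun x => r x * (ψ x * n x)) = fun x => ε * (ψ x * u x - ε * (v x * ψ x)) := by
    ext x
    have hx : (u x - ε * v x) * ε = n x * r x := by rw [h x]; field_simp
    linear_combination (-ψ x) * hx
  refine ⟨hpt ▸ (hu.sub (hv.const_mul ε)).const_mul ε, ?_⟩
  rw [hpt, integral_const_mul, integral_sub hu (hv.const_mul ε), integral_const_mul]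
  field_simp
  ring

end WeightedIntegrals

lemma abs_lap_le {d : ℕ} {f : EuclideanSpace ℝ (Fin d) → ℝ} {C : ℝ}
    {x : EuclideanSpace ℝ (Fin d)} (h : ‖iteratedFDeriv ℝ 2 f x‖ ≤ C) : |lap f x| ≤ d * C := by
  have hterm : ∀ i : Fin d,
      |iteratedFDeriv ℝ 2 f x ![EuclideanSpace.single i (1 : ℝ), EuclideanSpace.single i 1]| ≤ C :=
    fun i => by
      simpa [Fin.prod_univ_two] using (iteratedFDeriv ℝ 2 f x).le_of_opNorm_le h
        ![EuclideanSpace.single i (1 : ℝ), EuclideanSpace.single i 1]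
  calc |lap f x| ≤ ∑ i : Fin d,
        |iteratedFDeriv ℝ 2 f x ![EuclideanSpace.single i (1 : ℝ), EuclideanSpace.single i 1]| :=
        Finset.abs_sum_le_sum_abs _ _
    _ ≤ ∑ _i : Fin d, C := Finset.sum_le_sum fun i _ => hterm i
    _ = d * C := by simp

lemma continuous_lap {d : ℕ} {f : EuclideanSpace ℝ (Fin d) → ℝ} (hf : ContDiff ℝ 2 f) :
    Continuous (lap f) :=
  continuous_finsetSum _ fun _ _ => (hf.continuous_iteratedFDeriv le_rfl).eval_const _

section TimeSlice

variable {d : ℕ} {ψ n nt r : EuclideanSpace ℝ (Fin d) → ℝ} {ψm ψM Cψ ε : ℝ}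

lemma abs_integral_mul_dt_sub_le (hε : 0 < ε) (hψm : 0 < ψm)
    (hψbd : ∀ x, ψm ≤ ψ x ∧ ψ x ≤ ψM) (hψ : ContDiff ℝ 2 ψ)
    (hψ2 : ∀ x, ‖iteratedFDeriv ℝ 2 ψ x‖ ≤ Cψ)
    (hn : ∀ x, 0 ≤ n x) (hni : Integrable n) (hnt : Integrable nt) (hlapn : Integrable (lap n))
    (hpde : ∀ x, nt x - ε * lap n x = n x / ε * r x)
    (hibp : ∫ x, lap n x * ψ x = ∫ x, n x * lap ψ x) :
    Integrable (fun x => r x * (ψ x * n x)) ∧ Integrable (fun x => ψ x * n x) ∧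
      |(∫ x, ψ x * nt x) - ε⁻¹ * ∫ x, r x * (ψ x * n x)| ≤
        ε * (d * Cψ / ψm) * ∫ x, ψ x * n x := by
  have hψ_norm : ∀ x, ‖ψ x‖ ≤ ψM := fun x => by
    rw [Real.norm_eq_abs, abs_of_pos (hψm.trans_le (hψbd x).1)]
    exact (hψbd x).2
  have hψ_meas := hψ.continuous.aestronglyMeasurable (μ := volume)
  have hψn : Integrable (fun x => ψ x * n x) := hni.bdd_mul hψ_meas (ae_of_all _ hψ_norm)
  have hψ_lap : ∀ x, |lap ψ x| ≤ d * Cψ / ψm * ψ x := fun x => by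
    have hCψ : 0 ≤ d * Cψ / ψm := by
      have := (norm_nonneg _).trans (hψ2 x)
      positivity
    calc |lap ψ x| ≤ d * Cψ := abs_lap_le (hψ2 x)
      _ = d * Cψ / ψm * ψm := by field_simp
      _ ≤ d * Cψ / ψm * ψ x := by gcongr; exact (hψbd x).1
  have hn_lap : Integrable (fun x => n x * lap ψ x) :=
    hni.mul_bdd (continuous_lap hψ).aestronglyMeasurable
      (ae_of_all _ fun x => (abs_lap_le (hψ2 x)).trans_eq' (Real.norm_eq_abs _))
  obtain ⟨hrψn, hid⟩ := integral_mul_eq_add_of_sub_eq hε.ne'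
    (hnt.bdd_mul hψ_meas (ae_of_all _ hψ_norm)) (hlapn.mul_bdd hψ_meas (ae_of_all _ hψ_norm)) hpde
  refine ⟨hrψn, hψn, ?_⟩
  rw [hid, add_sub_cancel_right, hibp, abs_mul, abs_of_pos hε, mul_assoc]
  gcongr
  exact abs_integral_mul_le_const_mul_integral hn hn_lap hψn hψ_lap

lemma integral_mul_dt_nonpos (hε : 0 < ε) (hψm : 0 < ψm)
    (hψbd : ∀ x, ψm ≤ ψ x ∧ ψ x ≤ ψM) (hψ : ContDiff ℝ 2 ψ)
    (hψ2 : ∀ x, ‖iteratedFDeriv ℝ 2 ψ x‖ ≤ Cψ)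
    (hn : ∀ x, 0 ≤ n x) (hni : Integrable n) (hnt : Integrable nt) (hlapn : Integrable (lap n))
    (hpde : ∀ x, nt x - ε * lap n x = n x / ε * r x)
    (hibp : ∫ x, lap n x * ψ x = ∫ x, n x * lap ψ x)
    (hr : ∀ x, r x ≤ -(ε ^ 2 * (d * Cψ / ψm + 1))) :
    ∫ x, ψ x * nt x ≤ 0 := by
  obtain ⟨hrψn, hψn, hbound⟩ :=
    abs_integral_mul_dt_sub_le hε hψm hψbd hψ hψ2 hn hni hnt hlapn hpde hibp
  have hψn_nonneg : ∀ x, 0 ≤ ψ x * n x := fun x => mul_nonneg (hψm.trans_le (hψbd x).1).le (hn x)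
  have hQ : ε⁻¹ * ∫ x, r x * (ψ x * n x) ≤ -(ε * (d * Cψ / ψm + 1)) * ∫ x, ψ x * n x := by
    calc ε⁻¹ * ∫ x, r x * (ψ x * n x)
        ≤ ε⁻¹ * (-(ε ^ 2 * (d * Cψ / ψm + 1)) * ∫ x, ψ x * n x) := by
          gcongr; exact integral_mul_le_const_mul_integral hψn_nonneg hrψn hψn hr
      _ = -(ε * (d * Cψ / ψm + 1)) * ∫ x, ψ x * n x := by field_simp
  nlinarith [le_abs_self ((∫ x, ψ x * nt x) - ε⁻¹ * ∫ x, r x * (ψ x * n x)),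
    mul_nonneg hε.le (integral_nonneg (μ := volume) hψn_nonneg)]

lemma integral_mul_dt_nonneg (hε : 0 < ε) (hψm : 0 < ψm)
    (hψbd : ∀ x, ψm ≤ ψ x ∧ ψ x ≤ ψM) (hψ : ContDiff ℝ 2 ψ)
    (hψ2 : ∀ x, ‖iteratedFDeriv ℝ 2 ψ x‖ ≤ Cψ)
    (hn : ∀ x, 0 ≤ n x) (hni : Integrable n) (hnt : Integrable nt) (hlapn : Integrable (lap n))
    (hpde : ∀ x, nt x - ε * lap n x = n x / ε * r x)
    (hibp : ∫ x, lap n x * ψ x = ∫ x, n x * lap ψ x)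
    (hr : ∀ x, ε ^ 2 * (d * Cψ / ψm + 1) ≤ r x) :
    0 ≤ ∫ x, ψ x * nt x := by
  obtain ⟨hrψn, hψn, hbound⟩ :=
    abs_integral_mul_dt_sub_le hε hψm hψbd hψ hψ2 hn hni hnt hlapn hpde hibp
  have hψn_nonneg : ∀ x, 0 ≤ ψ x * n x := fun x => mul_nonneg (hψm.trans_le (hψbd x).1).le (hn x)
  have hQ : ε * (d * Cψ / ψm + 1) * ∫ x, ψ x * n x ≤ ε⁻¹ * ∫ x, r x * (ψ x * n x) := by
    calc ε * (d * Cψ / ψm + 1) * ∫ x, ψ x * n x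
        = ε⁻¹ * (ε ^ 2 * (d * Cψ / ψm + 1) * ∫ x, ψ x * n x) := by field_simp
      _ ≤ ε⁻¹ * ∫ x, r x * (ψ x * n x) := by
          gcongr; exact const_mul_integral_le_integral_mul hψn_nonneg hrψn hψn hr
  nlinarith [neg_abs_le ((∫ x, ψ x * nt x) - ε⁻¹ * ∫ x, r x * (ψ x * n x)),
    mul_nonneg hε.le (integral_nonneg (μ := volume) hψn_nonneg)]

end TimeSlice

theorem uniform_bounds_on_Ieps_general
    (d : ℕ)
    -- the function ψ, with its bounds and W^{2,∞} regularity
    (ψ : EuclideanSpace ℝ (Fin d) → ℝ) (ψm ψM : ℝ)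
    (hψm : 0 < ψm) (hψbd : ∀ x, ψm ≤ ψ x ∧ ψ x ≤ ψM)
    (hψreg : ContDiff ℝ 2 ψ)
    (Cψ : ℝ)
    (hψW : ∀ x, ‖iteratedFDeriv ℝ 1 ψ x‖ ≤ Cψ ∧ ‖iteratedFDeriv ℝ 2 ψ x‖ ≤ Cψ)
    -- the invasion exponent R, C¹ in both variables
    (R : EuclideanSpace ℝ (Fin d) → ℝ → ℝ)
    -- the constants I_m ≤ I_M with min_x R(x, I_m) = 0 and max_x R(x, I_M) = 0
    (Im IM : ℝ)
    (hRmin : (∀ x, 0 ≤ R x Im) ∧ ∃ x, R x Im = 0)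
    (hRmax : (∀ x, R x IM ≤ 0) ∧ ∃ x, R x IM = 0)
    -- the constant K: −K ≤ ∂R/∂I ≤ −1/K and W^{2,∞} bounds on R(·,I)
    (K : ℝ) (hK : 0 < K)
    (hRI : ∀ x I, deriv (fun J => R x J) I ∈ Icc (-K) (-(1 / K))) :
    ∃ C > 0, ∀ ε > 0, ∀ (n nt : ℝ → EuclideanSpace ℝ (Fin d) → ℝ) (Iε : ℝ → ℝ),
      -- n is a nonnegative classical solution
      (∀ t x, 0 ≤ t → 0 ≤ n t x) →
      (∀ t x, 0 ≤ t → HasDerivAt (fun s => n s x) (nt t x) t) →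
      (∀ t, 0 ≤ t → ContDiff ℝ 2 (n t)) →
      (∀ t, 0 ≤ t → Integrable (n t) volume ∧ Integrable (nt t) volume ∧
        Integrable (lap (n t)) volume) →
      -- the equation ∂t n − ε Δn = (n/ε) R(x, I_ε(t))
      (∀ t x, 0 ≤ t → nt t x - ε * lap (n t) x = n t x / ε * R x (Iε t)) →
      -- I_ε(t) = ∫ ψ n_ε(t), differentiation under the integral sign and
      -- integration by parts are valid
      (∀ t, Iε t = ∫ x, ψ x * n t x) →
      (∀ t, 0 ≤ t → HasDerivAt Iε (∫ x, ψ x * nt t x) t) →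
      (∀ t, 0 ≤ t → ∫ x, lap (n t) x * ψ x = ∫ x, n t x * lap ψ x) →
      -- initial bound implies the bound for all times
      (Im - C * ε ^ 2 ≤ Iε 0 ∧ Iε 0 ≤ IM + C * ε ^ 2) →
      ∀ t ≥ 0, Im - C * ε ^ 2 ≤ Iε t ∧ Iε t ≤ IM + C * ε ^ 2 := by
  set A : ℝ := d * Cψ / ψm
  have hA : 0 ≤ A := by
    have := (norm_nonneg _).trans (hψW 0).2
    positivity
  have hR_above : ∀ x I, IM ≤ I → R x I ≤ -((I - IM) / K) := fun x I h => by
    have := sub_le_of_deriv_le_neg (by positivity) (fun J => (hRI x J).2) h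
    linarith [hRmax.1 x, one_div_mul_eq_div K (I - IM)]
  have hR_below : ∀ x I, I ≤ Im → (Im - I) / K ≤ R x I := fun x I h => by
    have := sub_le_of_deriv_le_neg (by positivity) (fun J => (hRI x J).2) h
    linarith [hRmin.1 x, one_div_mul_eq_div K (Im - I)]
  refine ⟨K * (A + 1), by positivity, fun ε hε n nt Iε hn _ _ hint hpde hI hI' hibp h0 t ht => ?_⟩
  have hC : 0 ≤ K * (A + 1) * ε ^ 2 := by positivity
  have hgap : ε ^ 2 * (A + 1) = K * (A + 1) * ε ^ 2 / K := by field_simp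
  constructor
  · have h := le_of_hasDerivAt_of_nonpos_above (f := fun s => -Iε s)
      (M := -(Im - K * (A + 1) * ε ^ 2)) (fun s hs => (hI' s hs).neg) (neg_le_neg h0.1)
      (fun s hs hlt => neg_nonpos.2 <| integral_mul_dt_nonneg hε hψm hψbd hψreg
        (fun x => (hψW x).2) (hn s · hs) (hint s hs).1 (hint s hs).2.1 (hint s hs).2.2
        (hpde s · hs) (hibp s hs) fun x =>
          le_trans (by rw [hgap]; gcongr; linarith) (hR_below x _ (by linarith))) ht
    linarith
  · exact le_of_hasDerivAt_of_nonpos_above hI' h0.2 (fun s hs hlt =>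
      integral_mul_dt_nonpos hε hψm hψbd hψreg (fun x => (hψW x).2) (hn s · hs) (hint s hs).1
        (hint s hs).2.1 (hint s hs).2.2 (hpde s · hs) (hibp s hs) fun x =>
          (hR_above x _ (by linarith)).trans (by rw [hgap]; gcongr; linarith)) ht

/-- Theorem 2.1 of the paper: a priori bounds
`I_m - Cε² ≤ I_ε(t) ≤ I_M + Cε²` propagate from the initial time, with a constant `C`
depending only on `ψ, K, I_m, I_M` and not on `ε`. -/
theorem uniform_bounds_on_Ieps
    (d : ℕ) (hd : 1 ≤ d)
    -- the function ψ, with its bounds and W^{2,∞} regularity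
    (ψ : EuclideanSpace ℝ (Fin d) → ℝ) (ψm ψM : ℝ)
    (hψm : 0 < ψm) (hψbd : ∀ x, ψm ≤ ψ x ∧ ψ x ≤ ψM)
    (hψreg : ContDiff ℝ 2 ψ)
    (Cψ : ℝ)
    (hψW : ∀ x, ‖iteratedFDeriv ℝ 1 ψ x‖ ≤ Cψ ∧ ‖iteratedFDeriv ℝ 2 ψ x‖ ≤ Cψ)
    -- the invasion exponent R, C¹ in both variables
    (R : EuclideanSpace ℝ (Fin d) → ℝ → ℝ)
    (hR : ContDiff ℝ 1 (fun p : EuclideanSpace ℝ (Fin d) × ℝ => R p.1 p.2))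
    -- the constants I_m ≤ I_M with min_x R(x, I_m) = 0 and max_x R(x, I_M) = 0
    (Im IM : ℝ) (hIm : 0 < Im) (hImM : Im ≤ IM)
    (hRmin : (∀ x, 0 ≤ R x Im) ∧ ∃ x, R x Im = 0)
    (hRmax : (∀ x, R x IM ≤ 0) ∧ ∃ x, R x IM = 0)
    -- the constant K: −K ≤ ∂R/∂I ≤ −1/K and W^{2,∞} bounds on R(·,I)
    (K : ℝ) (hK : 0 < K)
    (hRI : ∀ x I, deriv (fun J => R x J) I ∈ Icc (-K) (-(1 / K)))
    (hRW : ∀ I ∈ Icc (Im / 2) (2 * IM), ∀ x,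
      |R x I| ≤ K ∧ ‖fderiv ℝ (fun y => R y I) x‖ ≤ K ∧
        ‖iteratedFDeriv ℝ 2 (fun y => R y I) x‖ ≤ K) :
    ∃ C > 0, ∀ ε > 0, ∀ (n nt : ℝ → EuclideanSpace ℝ (Fin d) → ℝ) (Iε : ℝ → ℝ),
      -- n is a nonnegative classical solution
      (∀ t x, 0 ≤ t → 0 ≤ n t x) →
      (∀ t x, 0 ≤ t → HasDerivAt (fun s => n s x) (nt t x) t) →
      (∀ t, 0 ≤ t → ContDiff ℝ 2 (n t)) →
      (∀ t, 0 ≤ t → Integrable (n t) volume ∧ Integrable (nt t) volume ∧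
        Integrable (lap (n t)) volume) →
      -- the equation ∂t n − ε Δn = (n/ε) R(x, I_ε(t))
      (∀ t x, 0 ≤ t → nt t x - ε * lap (n t) x = n t x / ε * R x (Iε t)) →
      -- I_ε(t) = ∫ ψ n_ε(t), differentiation under the integral sign and
      -- integration by parts are valid
      (∀ t, Iε t = ∫ x, ψ x * n t x) →
      (∀ t, 0 ≤ t → HasDerivAt Iε (∫ x, ψ x * nt t x) t) →
      (∀ t, 0 ≤ t → ∫ x, lap (n t) x * ψ x = ∫ x, n t x * lap ψ x) →
      -- initial bound implies the bound for all times
      (Im - C * ε ^ 2 ≤ Iε 0 ∧ Iε 0 ≤ IM + C * ε ^ 2) →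
      ∀ t ≥ 0, Im - C * ε ^ 2 ≤ Iε t ∧ Iε t ≤ IM + C * ε ^ 2 :=
  uniform_bounds_on_Ieps_general d ψ ψm ψM hψm hψbd hψreg Cψ hψW R Im IM hRmin hRmax K hK hRI
end

section
/- Let C > 0, K₂ > 0, and for each ε in a sequence tending to 0 let I_ε : (0,∞) → ℝ be differentiable with (d/dt) I_ε(t) ≥ −εC − A_ε e^{−K₂ t/ε} for all t > 0, where A_ε ≥ 0 satisfies ε · log(1 + A_ε) → 0 as ε → 0 (i.e. A_ε ≤ e^{o(1)/ε}). If I_ε converges pointwise on (0,∞) to a function I as ε → 0, then I is nondecreasing on (0,∞). -/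
open Filter

/-- monotonicity consequence in Theorem 3.1 of the paper, in ODE form:
if `(d/dt) I_ε ≥ −εC − A_ε e^{−K₂ t/ε}` with `A_ε ≥ 0` and `ε log(1 + A_ε) → 0`
(i.e. `A_ε ≤ e^{o(1)/ε}`), along a sequence `ε → 0`, then any pointwise limit of `I_ε`
on `(0,∞)` is nondecreasing. -/
theorem limit_nondecreasing
    (C K₂ : ℝ) (hC : 0 < C) (hK₂ : 0 < K₂)
    (ε : ℕ → ℝ) (hεpos : ∀ k, 0 < ε k)
    (hε0 : Tendsto ε atTop (nhds 0))
    (A : ℕ → ℝ) (hA : ∀ k, 0 ≤ A k)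
    (hAsmall : Tendsto (fun k => ε k * Real.log (1 + A k)) atTop (nhds 0))
    (Iε : ℕ → ℝ → ℝ) (I' : ℕ → ℝ → ℝ)
    (hdiff : ∀ k, ∀ t > (0 : ℝ), HasDerivAt (Iε k) (I' k t) t)
    (hlb : ∀ k, ∀ t > (0 : ℝ),
      I' k t ≥ -(ε k * C) - A k * Real.exp (-K₂ * t / ε k))
    (I : ℝ → ℝ)
    (hconv : ∀ t > (0 : ℝ), Tendsto (fun k => Iε k t) atTop (nhds (I t))) :
    ∀ s t : ℝ, 0 < s → s ≤ t → I s ≤ I t := by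
  intro s t hs hst
  have ht : 0 < t := lt_of_lt_of_le hs hst
  -- key pointwise inequality: Iε k s - Iε k t ≤ (ε k * C + A k * exp(-K₂ s / ε k)) * (t - s)
  have key : ∀ k, Iε k s - Iε k t ≤
      (ε k * C + A k * Real.exp (-K₂ * s / ε k)) * (t - s) := by
    intro k
    set B : ℝ := ε k * C + A k * Real.exp (-K₂ * s / ε k) with hB
    have hBnn : 0 ≤ B :=
      add_nonneg (mul_nonneg (hεpos k).le hC.le)
        (mul_nonneg (hA k) (Real.exp_pos _).le)
    -- f u = Iε k u + B * u is monotone on [s,t]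
    set f : ℝ → ℝ := fun u => Iε k u + B * u with hf
    have hderiv : ∀ x ∈ Set.Icc s t, HasDerivAt f (I' k x + B) x := by
      intro x hx
      have hx0 : 0 < x := lt_of_lt_of_le hs hx.1
      exact (hdiff k x hx0).add ((hasDerivAt_id x).const_mul B |>.congr_deriv (by ring))
    have hmono : MonotoneOn f (Set.Icc s t) := by
      apply monotoneOn_of_deriv_nonneg (convex_Icc s t)
      · exact fun x hx => ((hderiv x hx).differentiableAt).continuousAt.continuousWithinAt
      · intro x hx
        rw [interior_Icc] at hx
        exact ((hderiv x (Set.mem_Icc_of_Ioo hx)).differentiableAt).differentiableWithinAt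
      · intro x hx
        rw [interior_Icc] at hx
        rw [(hderiv x (Set.mem_Icc_of_Ioo hx)).deriv]
        have hx0 : 0 < x := lt_trans hs hx.1
        have h1 := hlb k x hx0
        have h2 : Real.exp (-K₂ * x / ε k) ≤ Real.exp (-K₂ * s / ε k) := by
          apply Real.exp_le_exp.2
          apply (div_le_div_iff_of_pos_right (hεpos k)).2
          nlinarith [hx.1]
        have h3 : 0 ≤ A k * (Real.exp (-K₂ * s / ε k) - Real.exp (-K₂ * x / ε k)) :=
          mul_nonneg (hA k) (sub_nonneg.2 h2)
        rw [hB]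
        nlinarith
    have := hmono (Set.left_mem_Icc.2 hst) (Set.right_mem_Icc.2 hst) hst
    simp only [hf] at this
    nlinarith
  -- the right-hand side tends to 0
  have hinv : Tendsto (fun k => (ε k)⁻¹) atTop atTop := by
    apply tendsto_inv_nhdsGT_zero.comp
    rw [tendsto_nhdsWithin_iff]
    exact ⟨hε0, Eventually.of_forall hεpos⟩
  have hexp0 : Tendsto (fun k => Real.exp (-(K₂ * s / 2) / ε k)) atTop (nhds 0) := by
    apply Real.tendsto_exp_atBot.comp
    have : Tendsto (fun k => (K₂ * s / 2) * (ε k)⁻¹) atTop atTop :=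
      hinv.const_mul_atTop (by positivity)
    have h := tendsto_neg_atTop_atBot.comp this
    refine h.congr (fun k => by simp; ring)
  have hAe0 : Tendsto (fun k => A k * Real.exp (-K₂ * s / ε k)) atTop (nhds 0) := by
    apply squeeze_zero' (g := fun k => Real.exp (-(K₂ * s / 2) / ε k))
    · exact Eventually.of_forall fun k => mul_nonneg (hA k) (Real.exp_pos _).le
    · have hev : ∀ᶠ k in atTop, ε k * Real.log (1 + A k) < K₂ * s / 2 :=
        hAsmall.eventually_lt_const (by positivity)
      filter_upwards [hev] with k hk
      have hεk := hεpos k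
      have hlog : Real.log (1 + A k) ≤ (K₂ * s / 2) / ε k := by
        rw [le_div_iff₀ hεk]
        nlinarith
      calc A k * Real.exp (-K₂ * s / ε k)
          ≤ (1 + A k) * Real.exp (-K₂ * s / ε k) := by
            have := Real.exp_pos (-K₂ * s / ε k)
            nlinarith
        _ = Real.exp (Real.log (1 + A k) + -K₂ * s / ε k) := by
            rw [Real.exp_add, Real.exp_log (by linarith [hA k])]
        _ ≤ Real.exp (-(K₂ * s / 2) / ε k) := by
            apply Real.exp_le_exp.2
            have heq : -K₂ * s / ε k = -(K₂ * s / 2) / ε k - (K₂ * s / 2) / ε k := by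
              ring
            rw [heq]
            linarith
    · exact hexp0
  have hrhs0 : Tendsto (fun k => (ε k * C + A k * Real.exp (-K₂ * s / ε k)) * (t - s))
      atTop (nhds 0) := by
    have h1 : Tendsto (fun k => ε k * C) atTop (nhds 0) := by
      simpa using hε0.mul_const C
    have := (h1.add hAe0).mul_const (t - s)
    simpa using this
  have hlhs : Tendsto (fun k => Iε k s - Iε k t) atTop (nhds (I s - I t)) :=
    (hconv s hs).sub (hconv t ht)
  have := le_of_tendsto_of_tendsto' hlhs hrhs0 key
  linarith
end

section
/- Let b : ℝ^d → ℝ with b(x) ≥ b_m > 0 for all x, let Σ₁, Σ₂ ∈ ℝ, and let Ψ₁, Ψ₂ : ℝ^d → ℝ be bounded functions. Suppose that for i = 1, 2 the function φ_i(x) := Ψ_i(x) + b(x) Σ_i satisfies sup_{x∈ℝ^d} φ_i(x) = 0 and this supremum is attained at some point x_i ∈ ℝ^d. Then b_m |Σ₁ − Σ₂| ≤ sup_{x∈ℝ^d} |Ψ₁(x) − Ψ₂(x)|. -/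
/-- key lemma, inequalities (4.6)–(4.7), in the uniqueness proof of
Theorem 4.1 of the paper: if `φ_i = Ψ_i + b·Σ_i` both have supremum `0`, attained,
with `b ≥ b_m > 0` and `Ψ_i` bounded, then `b_m |Σ₁ − Σ₂| ≤ sup_x |Ψ₁ − Ψ₂|`. -/
theorem multiplier_difference_bound
    (d : ℕ) (b : EuclideanSpace ℝ (Fin d) → ℝ) (bm : ℝ) (hbm : 0 < bm)
    (hb : ∀ x, bm ≤ b x)
    (S₁ S₂ : ℝ) (Ψ₁ Ψ₂ : EuclideanSpace ℝ (Fin d) → ℝ)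
    (M : ℝ) (hΨ₁bdd : ∀ x, |Ψ₁ x| ≤ M) (hΨ₂bdd : ∀ x, |Ψ₂ x| ≤ M)
    (h₁le : ∀ x, Ψ₁ x + b x * S₁ ≤ 0) (h₁eq : ∃ x, Ψ₁ x + b x * S₁ = 0)
    (h₂le : ∀ x, Ψ₂ x + b x * S₂ ≤ 0) (h₂eq : ∃ x, Ψ₂ x + b x * S₂ = 0) :
    bm * |S₁ - S₂| ≤ ⨆ x, |Ψ₁ x - Ψ₂ x| := by
  have hbdd : BddAbove (Set.range fun x => |Ψ₁ x - Ψ₂ x|) := by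
    refine ⟨2 * M, ?_⟩
    rintro _ ⟨x, rfl⟩
    calc |Ψ₁ x - Ψ₂ x| ≤ |Ψ₁ x| + |Ψ₂ x| := abs_sub _ _
      _ ≤ M + M := add_le_add (hΨ₁bdd x) (hΨ₂bdd x)
      _ = 2 * M := by ring
  have key : ∀ (T₁ T₂ : ℝ) (Φ₁ Φ₂ : EuclideanSpace ℝ (Fin d) → ℝ),
      (∀ x, Φ₁ x + b x * T₁ ≤ 0) → (∃ x, Φ₂ x + b x * T₂ = 0) →
      BddAbove (Set.range fun x => |Φ₁ x - Φ₂ x|) →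
      bm * (T₁ - T₂) ≤ ⨆ x, |Φ₁ x - Φ₂ x| := by
    intro T₁ T₂ Φ₁ Φ₂ h₁ h₂ hB
    obtain ⟨x₂, hx₂⟩ := h₂
    have hsup : |Φ₁ x₂ - Φ₂ x₂| ≤ ⨆ x, |Φ₁ x - Φ₂ x| := le_ciSup hB x₂
    rcases le_or_gt T₁ T₂ with h | h
    · have : bm * (T₁ - T₂) ≤ 0 := mul_nonpos_of_nonneg_of_nonpos hbm.le (by linarith)
      exact this.trans ((abs_nonneg _).trans hsup)
    · have h1 : b x₂ * (T₁ - T₂) ≤ Φ₂ x₂ - Φ₁ x₂ := by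
        have := h₁ x₂
        nlinarith
      have h2 : bm * (T₁ - T₂) ≤ b x₂ * (T₁ - T₂) :=
        mul_le_mul_of_nonneg_right (hb x₂) (by linarith)
      calc bm * (T₁ - T₂) ≤ Φ₂ x₂ - Φ₁ x₂ := h2.trans h1
        _ ≤ |Φ₁ x₂ - Φ₂ x₂| := by rw [abs_sub_comm]; exact le_abs_self _
        _ ≤ _ := hsup
  rcases abs_cases (S₁ - S₂) with ⟨he, _⟩ | ⟨he, _⟩
  · rw [he]; exact key S₁ S₂ Ψ₁ Ψ₂ h₁le h₂eq hbdd
  · rw [he]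
    have h := key S₂ S₁ Ψ₂ Ψ₁ h₂le h₁eq (by simpa [abs_sub_comm] using hbdd)
    calc bm * -(S₁ - S₂) = bm * (S₂ - S₁) := by ring
      _ ≤ ⨆ x, |Ψ₂ x - Ψ₁ x| := h
      _ = ⨆ x, |Ψ₁ x - Ψ₂ x| := by simp [abs_sub_comm]
end

section
/- Let φ₁, φ₂, G₁, G₂ : ℝ^d → ℝ with Ψ_i := φ_i − G_i bounded for i = 1,2. Suppose sup_{x∈ℝ^d} φ_i(x) = 0 is attained at some x_i ∈ ℝ^d for i = 1,2, and suppose the function F := G₁ − G₂ has a constant sign on ℝ^d (either F(x) ≥ 0 for all x, or F(x) ≤ 0 for all x). Then inf_{x∈ℝ^d} |G₁(x) − G₂(x)| ≤ sup_{x∈ℝ^d} |Ψ₁(x) − Ψ₂(x)|. -/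
/-- key lemma in the uniqueness proof of Theorem 4.2 of the paper:
if `φ_i` both have supremum `0`, attained, with `Ψ_i := φ_i − G_i` bounded, and
`G₁ − G₂` has a constant sign, then `inf_x |G₁ − G₂| ≤ sup_x |Ψ₁ − Ψ₂|`. -/
theorem general_multiplier_difference_bound
    (d : ℕ) (φ₁ φ₂ G₁ G₂ : EuclideanSpace ℝ (Fin d) → ℝ)
    (M : ℝ) (hΨ₁bdd : ∀ x, |φ₁ x - G₁ x| ≤ M) (hΨ₂bdd : ∀ x, |φ₂ x - G₂ x| ≤ M)
    (h₁le : ∀ x, φ₁ x ≤ 0) (h₁eq : ∃ x, φ₁ x = 0)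
    (h₂le : ∀ x, φ₂ x ≤ 0) (h₂eq : ∃ x, φ₂ x = 0)
    (hsign : (∀ x, 0 ≤ G₁ x - G₂ x) ∨ (∀ x, G₁ x - G₂ x ≤ 0)) :
    ⨅ x, |G₁ x - G₂ x| ≤ ⨆ x, |(φ₁ x - G₁ x) - (φ₂ x - G₂ x)| := by
  have hbb : BddBelow (Set.range fun x => |G₁ x - G₂ x|) :=
    ⟨0, by rintro _ ⟨x, rfl⟩; exact abs_nonneg _⟩
  have hba : BddAbove (Set.range fun x => |(φ₁ x - G₁ x) - (φ₂ x - G₂ x)|) := by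
    refine ⟨2 * M, ?_⟩
    rintro _ ⟨x, rfl⟩
    calc |(φ₁ x - G₁ x) - (φ₂ x - G₂ x)| ≤ |φ₁ x - G₁ x| + |φ₂ x - G₂ x| := abs_sub _ _
      _ ≤ M + M := add_le_add (hΨ₁bdd x) (hΨ₂bdd x)
      _ = 2 * M := (two_mul M).symm
  rcases hsign with h | h
  · obtain ⟨x₂, hx₂⟩ := h₂eq
    have key : |G₁ x₂ - G₂ x₂| ≤ |(φ₁ x₂ - G₁ x₂) - (φ₂ x₂ - G₂ x₂)| := by
      rw [abs_of_nonneg (h x₂)]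
      have : G₁ x₂ - G₂ x₂ ≤ (φ₂ x₂ - G₂ x₂) - (φ₁ x₂ - G₁ x₂) := by
        have := h₁le x₂; linarith [hx₂]
      calc G₁ x₂ - G₂ x₂ ≤ (φ₂ x₂ - G₂ x₂) - (φ₁ x₂ - G₁ x₂) := this
        _ ≤ |(φ₂ x₂ - G₂ x₂) - (φ₁ x₂ - G₁ x₂)| := le_abs_self _
        _ = |(φ₁ x₂ - G₁ x₂) - (φ₂ x₂ - G₂ x₂)| := abs_sub_comm _ _
    exact le_trans (ciInf_le hbb x₂) (le_trans key (le_ciSup hba x₂))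
  · obtain ⟨x₁, hx₁⟩ := h₁eq
    have key : |G₁ x₁ - G₂ x₁| ≤ |(φ₁ x₁ - G₁ x₁) - (φ₂ x₁ - G₂ x₁)| := by
      rw [abs_of_nonpos (h x₁)]
      have : -(G₁ x₁ - G₂ x₁) ≤ (φ₁ x₁ - G₁ x₁) - (φ₂ x₁ - G₂ x₁) := by
        have := h₂le x₁; linarith [hx₁]
      exact le_trans this (le_abs_self _)
    exact le_trans (ciInf_le hbb x₁) (le_trans key (le_ciSup hba x₁))
end

section
/- Define Ψ : [0,∞) × ℝ → ℝ by Ψ(t,x) = −(x − t/2 − t²)²/(1 + 4t) + t²/4 + t³/3. Then Ψ(0,x) = −x² for all x ∈ ℝ, and for every t > 0 and x ∈ ℝ, Ψ is differentiable with ∂t Ψ(t,x) = x + (∂x Ψ(t,x))². -/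
/-!
Insert the ansatz `Ψ(t,x) = a(t) (x - b(t))² + c(t)` into `Ψ_t = x + Ψ_x²` and write
`x = (x - b) + b`: comparing coefficients of powers of `x - b` turns the PDE into the ODE system
`a' = 4a²`, `-2ab' = 1`, `c' = b`. With `a(0) = -1`, `b(0) = c(0) = 0` it is solved by
`a = -1/(1+4t)`, `b = t/2 + t²`, `c = t²/4 + t³/3`, which is `Psi`.
-/

/-- The explicit moving quadratic profile of Section 6.1 of the paper. -/
noncomputable def Psi (t x : ℝ) : ℝ :=
  -(x - t / 2 - t ^ 2) ^ 2 / (1 + 4 * t) + t ^ 2 / 4 + t ^ 3 / 3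

noncomputable def quadraticProfile (a b c : ℝ → ℝ) (t x : ℝ) : ℝ :=
  a t * (x - b t) ^ 2 + c t

theorem hasDerivAt_quadraticProfile_snd (a b c : ℝ → ℝ) (t x : ℝ) :
    HasDerivAt (fun y => quadraticProfile a b c t y) (2 * a t * (x - b t)) x := by
  have h := (((hasDerivAt_id x).sub_const (b t)).pow 2).const_mul (a t) |>.add_const (c t)
  exact h.congr_deriv (by simp only [id, Nat.cast_ofNat, mul_one]; ring)

section QuadraticProfile

variable {a b c : ℝ → ℝ} {a' b' c' t : ℝ}

theorem hasDerivAt_quadraticProfile_fst (ha : HasDerivAt a a' t) (hb : HasDerivAt b b' t)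
    (hc : HasDerivAt c c' t) (x : ℝ) :
    HasDerivAt (fun s => quadraticProfile a b c s x)
      (a' * (x - b t) ^ 2 - 2 * a t * b' * (x - b t) + c') t := by
  have h := (ha.mul ((hb.const_sub x).pow 2)).add hc
  exact h.congr_deriv (by simp only [Pi.pow_apply, Nat.cast_ofNat]; ring)

theorem hasDerivAt_quadraticProfile_fst_of_ode (ha : HasDerivAt a a' t)
    (hb : HasDerivAt b b' t) (hc : HasDerivAt c c' t) (ha' : a' = 4 * a t ^ 2)
    (hb' : -2 * a t * b' = 1) (hc' : c' = b t) (x : ℝ) :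
    HasDerivAt (fun s => quadraticProfile a b c s x) (x + (2 * a t * (x - b t)) ^ 2) t := by
  convert hasDerivAt_quadraticProfile_fst ha hb hc x using 1
  linear_combination (-(x - b t) ^ 2) * ha' - (x - b t) * hb' - hc'

end QuadraticProfile

theorem hasDerivAt_neg_inv_one_add_four_mul {t : ℝ} (ht : 1 + 4 * t ≠ 0) :
    HasDerivAt (fun s : ℝ => -(1 + 4 * s)⁻¹) (4 * (-(1 + 4 * t)⁻¹) ^ 2) t := by
  have h := (((hasDerivAt_id t).const_mul 4).const_add 1).inv ht |>.neg
  exact h.congr_deriv (by simp only [id]; field_simp)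

theorem hasDerivAt_half_add_sq (t : ℝ) :
    HasDerivAt (fun s : ℝ => s / 2 + s ^ 2) (1 / 2 + 2 * t) t :=
  ((hasDerivAt_id t).div_const 2).add (hasDerivAt_pow 2 t) |>.congr_deriv (by simp)

theorem hasDerivAt_quarter_sq_add_third_cube (t : ℝ) :
    HasDerivAt (fun s : ℝ => s ^ 2 / 4 + s ^ 3 / 3) (t / 2 + t ^ 2) t :=
  ((hasDerivAt_pow 2 t).div_const 4).add ((hasDerivAt_pow 3 t).div_const 3)
    |>.congr_deriv (by norm_num; ring)

theorem psi_eq_quadraticProfile :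
    Psi = quadraticProfile (fun s => -(1 + 4 * s)⁻¹) (fun s => s / 2 + s ^ 2)
      (fun s => s ^ 2 / 4 + s ^ 3 / 3) := by
  funext t x
  simp only [Psi, quadraticProfile]
  ring

/-- explicit solution in the analytical counterexample of Section 6.1
of the paper: `Ψ(t,x) = −(x − t/2 − t²)²/(1+4t) + t²/4 + t³/3` satisfies
`Ψ(0,x) = −x²` and solves `∂t Ψ = x + (∂x Ψ)²` for `t > 0`. -/
theorem explicit_solution_psi :
    (∀ x : ℝ, Psi 0 x = -x ^ 2) ∧
    ∀ t > (0 : ℝ), ∀ x : ℝ,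
      DifferentiableAt ℝ (fun s => Psi s x) t ∧
      DifferentiableAt ℝ (fun y => Psi t y) x ∧
      deriv (fun s => Psi s x) t = x + (deriv (fun y => Psi t y) x) ^ 2 := by
  refine ⟨fun x => by simp [Psi], fun t ht x => ?_⟩
  have hden : 1 + 4 * t ≠ 0 := by positivity
  have hb' : -2 * -(1 + 4 * t)⁻¹ * (1 / 2 + 2 * t) = 1 := by field_simp; ring
  rw [psi_eq_quadraticProfile]
  have htime := hasDerivAt_quadraticProfile_fst_of_ode
    (hasDerivAt_neg_inv_one_add_four_mul hden) (hasDerivAt_half_add_sq t)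
    (hasDerivAt_quarter_sq_add_third_cube t) rfl hb' rfl x
  have hspace := hasDerivAt_quadraticProfile_snd (fun s => -(1 + 4 * s)⁻¹)
    (fun s => s / 2 + s ^ 2) (fun s => s ^ 2 / 4 + s ^ 3 / 3) t x
  exact ⟨htime.differentiableAt, hspace.differentiableAt, by rw [htime.deriv, hspace.deriv]⟩
end

section
/- Let α > 0, δ > 0 and set t̄ = δ/α. Define for t ≥ 0 and x ∈ ℝ: f₁(t,x) = −(x − t/2 − t²)²/(1 + 4t), f₂(t,x) = −(x − α − t/2 − t²)²/(1 + 4t) − δ + αt, g₁(t,x) = f₁(t,x) + δ − αt, and g₂(t,x) = −(x − α − t/2 − t²)²/(1 + 4t). Then: (i) for every t with 0 ≤ t < t̄, the function x ↦ max(f₁(t,x), f₂(t,x)) has maximum value 0 over ℝ, attained exactly at the single point x = t/2 + t²; (ii) for every t > t̄, the function x ↦ max(g₁(t,x), g₂(t,x)) has maximum value 0 over ℝ, attained exactly at the single point x = α + t/2 + t². Consequently, the concentration point x̄(t) (the unique maximizer) jumps by α at time t̄, and the associated multiplier ϱ(t), equal to t/2 + t² for t < t̄ and to α + t/2 + t²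 for t > t̄, is discontinuous at t̄. -/
/-!
Each of the two profiles is a nonpositive quadratic in `x` vanishing only at its vertex, and the
other one is shifted down by `δ - α t`. Before `t̄ = δ/α` this shift is positive, so the second
profile stays strictly negative and the maximum is governed by the first one; after `t̄` the roles
are exchanged. Hence the maximizer is `t/2 + t²` before `t̄` and `α + t/2 + t²` after it, and a
multiplier following these two branches has different one-sided limits at `t̄`.
-/

open Set Filter Topology

def HasUniqueZeroMaxAt {X β : Type*} [LinearOrder β] [Zero β] (h : X → β) (x₀ : X) : Prop :=
  (∀ x, h x ≤ 0) ∧ h x₀ = 0 ∧ ∀ x, h x = 0 → x = x₀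

namespace HasUniqueZeroMaxAt

variable {X β : Type*} [LinearOrder β] [Zero β] {u v : X → β} {x₀ : X}

theorem max_neg (hu : HasUniqueZeroMaxAt u x₀) (hv : ∀ x, v x < 0) :
    HasUniqueZeroMaxAt (fun x => max (u x) (v x)) x₀ := by
  obtain ⟨hu_nonpos, hu_zero, hu_unique⟩ := hu
  refine ⟨fun x => max_le (hu_nonpos x) (hv x).le, ?_,
    fun x (hx : max (u x) (v x) = 0) => hu_unique x ?_⟩
  · show max (u x₀) (v x₀) = 0
    rw [hu_zero, max_eq_left (hv x₀).le]
  · rcases max_choice (u x) (v x) with h | h <;> rw [h] at hx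
    · exact hx
    · exact absurd hx (hv x).ne

theorem neg_max (hu : HasUniqueZeroMaxAt u x₀) (hv : ∀ x, v x < 0) :
    HasUniqueZeroMaxAt (fun x => max (v x) (u x)) x₀ :=
  funext (fun x => max_comm (u x) (v x)) ▸ hu.max_neg hv

end HasUniqueZeroMaxAt

theorem hasUniqueZeroMaxAt_neg_sq_div {a : ℝ} (ha : 0 < a) (c : ℝ) :
    HasUniqueZeroMaxAt (fun x => -(x - c) ^ 2 / a) c := by
  refine ⟨fun x => div_nonpos_of_nonpos_of_nonneg (neg_nonpos.2 (sq_nonneg _)) ha.le,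
    by simp, fun x hx => ?_⟩
  rwa [div_eq_zero_iff, or_iff_left ha.ne', neg_eq_zero, sq_eq_zero_iff, sub_eq_zero] at hx

theorem not_continuousAt_of_eventuallyEq {X Y : Type*} [TopologicalSpace X] [TopologicalSpace Y]
    [T2Space Y] {ϱ f g : X → Y} {s t : Set X} {b : X} [(𝓝[s] b).NeBot] [(𝓝[t] b).NeBot]
    (hf : ContinuousAt f b) (hg : ContinuousAt g b) (hϱf : ϱ =ᶠ[𝓝[s] b] f)
    (hϱg : ϱ =ᶠ[𝓝[t] b] g) (hfg : f b ≠ g b) : ¬ ContinuousAt ϱ b := by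
  intro hϱ
  have hϱ_eq_f : ϱ b = f b := tendsto_nhds_unique (hϱ.tendsto.mono_left nhdsWithin_le_nhds)
    ((hf.tendsto.mono_left nhdsWithin_le_nhds).congr' hϱf.symm)
  have hϱ_eq_g : ϱ b = g b := tendsto_nhds_unique (hϱ.tendsto.mono_left nhdsWithin_le_nhds)
    ((hg.tendsto.mono_left nhdsWithin_le_nhds).congr' hϱg.symm)
  exact hfg (hϱ_eq_f.symm.trans hϱ_eq_g)

/-- conclusion of the analytical counterexample of Section 6.1 of the
paper: with `f₁, f₂, g₁, g₂` the explicit quadratic profiles and `t̄ = δ/α`, for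
`0 ≤ t < t̄` the function `max(f₁(t,·), f₂(t,·))` has maximum `0` attained exactly at
`t/2 + t²`, while for `t > t̄` the function `max(g₁(t,·), g₂(t,·))` has maximum `0`
attained exactly at `α + t/2 + t²`; consequently the concentration point jumps by `α`
at `t̄` and the multiplier `ϱ` is discontinuous at `t̄`. -/
theorem jump_of_concentration_point
    (α δ : ℝ) (hα : 0 < α) (hδ : 0 < δ) :
    letI tbar : ℝ := δ / α
    letI f₁ : ℝ → ℝ → ℝ := fun t x => -(x - t / 2 - t ^ 2) ^ 2 / (1 + 4 * t)
    letI f₂ : ℝ → ℝ → ℝ := fun t x =>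
      -(x - α - t / 2 - t ^ 2) ^ 2 / (1 + 4 * t) - δ + α * t
    letI g₁ : ℝ → ℝ → ℝ := fun t x => f₁ t x + δ - α * t
    letI g₂ : ℝ → ℝ → ℝ := fun t x => -(x - α - t / 2 - t ^ 2) ^ 2 / (1 + 4 * t)
    -- (i) before the critical time t̄ the unique maximizer is t/2 + t²
    ((∀ t, 0 ≤ t → t < tbar →
        (∀ x, max (f₁ t x) (f₂ t x) ≤ 0) ∧
        max (f₁ t (t / 2 + t ^ 2)) (f₂ t (t / 2 + t ^ 2)) = 0 ∧
        (∀ x, max (f₁ t x) (f₂ t x) = 0 → x = t / 2 + t ^ 2)) ∧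
    -- (ii) after the critical time t̄ the unique maximizer is α + t/2 + t²
    (∀ t, tbar < t →
        (∀ x, max (g₁ t x) (g₂ t x) ≤ 0) ∧
        max (g₁ t (α + t / 2 + t ^ 2)) (g₂ t (α + t / 2 + t ^ 2)) = 0 ∧
        (∀ x, max (g₁ t x) (g₂ t x) = 0 → x = α + t / 2 + t ^ 2)) ∧
    -- consequently the multiplier ϱ, equal to t/2 + t² for t < t̄ and to
    -- α + t/2 + t² for t > t̄, is discontinuous at t̄
    (∀ ϱ : ℝ → ℝ,
        (∀ t ∈ Ico (0 : ℝ) tbar, ϱ t = t / 2 + t ^ 2) →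
        (∀ t, tbar < t → ϱ t = α + t / 2 + t ^ 2) →
        ¬ ContinuousAt ϱ tbar)) := by
  have htbar : 0 < δ / α := div_pos hδ hα
  have profile (t c : ℝ) (ht : 0 ≤ t) :=
    hasUniqueZeroMaxAt_neg_sq_div (by linarith : (0 : ℝ) < 1 + 4 * t) c
  refine ⟨fun t ht0 htb => ?_, fun t htb => ?_, fun ϱ hϱ_before hϱ_after => ?_⟩
  · have hαt : α * t < δ := (lt_div_iff₀' hα).mp htb
    have h₁ := profile t (t / 2 + t ^ 2) ht0
    have h₂ := profile t (α + t / 2 + t ^ 2) ht0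
    simp only [sub_sub]
    exact h₁.max_neg fun x => by linarith [h₂.1 x]
  · have ht0 : 0 ≤ t := (htbar.trans htb).le
    have hαt : δ < α * t := (div_lt_iff₀' hα).mp htb
    have h₁ := profile t (t / 2 + t ^ 2) ht0
    have h₂ := profile t (α + t / 2 + t ^ 2) ht0
    simp only [sub_sub]
    exact h₂.neg_max fun x => by linarith [h₁.1 x]
  · refine not_continuousAt_of_eventuallyEq (f := fun t => t / 2 + t ^ 2)
      (g := fun t => α + t / 2 + t ^ 2) (s := Iio (δ / α)) (t := Ioi (δ / α))
      (by fun_prop) (by fun_prop) ?_ ?_ (by simpa using hα.ne')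
    · exact eventually_of_mem (Ico_mem_nhdsLT htbar) hϱ_before
    · exact eventually_of_mem self_mem_nhdsWithin hϱ_after
end
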